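/- Let G be a bipartite graph with bipartition (X, Y) whose connected components are G_1, …, G_m (each G_i inheriting the bipartition (X ∩ V(G_i), Y ∩ V(G_i))). Then the bipartite crossing number of G equals the sum of the bipartite crossing numbers of its components: bcr(G) = Σ_{i=1}^{m} bcr(G_i). -/

import Mathlib

/-!
Restricting a two-layer drawing of `G` to a component `Gᵢ` (keeping the relative order on each
layer) gives a drawing of `Gᵢ` whose crossings are exactly the crossings of `G` between two edges
of `Gᵢ`; hence `bcr G ≥ ∑ bcr Gᵢ`. Conversely, placing optimal drawings of the components side
by side, in the same order of components on both layers, creates no crossing between edges of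
different components, since those components would have to precede each other on one layer
and follow each other on the other.
-/

open Finset

variable {X Y : Type} [Fintype X] [Fintype Y] [DecidableEq X] [DecidableEq Y]

/-- The adjacency relation on `X ⊕ Y` induced by an edge set `E ⊆ X × Y`. -/
def biAdj (E : Finset (X × Y)) : X ⊕ Y → X ⊕ Y → Prop
  | Sum.inl x, Sum.inr y => (x, y) ∈ E
  | Sum.inr y, Sum.inl x => (x, y) ∈ E
  | _, _ => False

/-- The bipartite graph with parts `X`, `Y` and edge set `E`, as a simple graph on `X ⊕ Y`. -/
def biGraph (E : Finset (X × Y)) : SimpleGraph (X ⊕ Y) where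
  Adj := biAdj E
  symm := ⟨by rintro (x | y) (x' | y') h <;> simp_all [biAdj]⟩
  loopless := ⟨by rintro (x | y) h <;> simp_all [biAdj]⟩

instance (E : Finset (X × Y)) : DecidableRel (biGraph E).Adj := fun u v =>
  match u, v with
  | Sum.inl x, Sum.inr y => (inferInstance : Decidable ((x, y) ∈ E))
  | Sum.inr y, Sum.inl x => (inferInstance : Decidable ((x, y) ∈ E))
  | Sum.inl _, Sum.inl _ => .isFalse (by simp [biGraph, biAdj])
  | Sum.inr _, Sum.inr _ => .isFalse (by simp [biGraph, biAdj])

/-- The crossing number of the two-layer drawing `(fX, fY)` of the bipartite graph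
with edge set `E`: the number of pairs of edges `(x, y)`, `(x', y')` with
`fX x < fX x'` and `fY y' < fY y`. -/
def crossNum (E : Finset (X × Y)) (fX : X ≃ Fin (Fintype.card X))
    (fY : Y ≃ Fin (Fintype.card Y)) : ℕ :=
  ((E ×ˢ E).filter fun p => fX p.1.1 < fX p.2.1 ∧ fY p.2.2 < fY p.1.2).card

/-- A leaf is a vertex of degree one. -/
def IsLeaf (E : Finset (X × Y)) (v : X ⊕ Y) : Prop := (biGraph E).degree v = 1

/-- `G` has no sibling pairs: no two distinct leaves have a common neighbor. -/
def NoSiblingPairs (E : Finset (X × Y)) : Prop :=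
  ∀ u v : X ⊕ Y, u ≠ v → IsLeaf E u → IsLeaf E v →
    ∀ w, ¬ ((biGraph E).Adj u w ∧ (biGraph E).Adj v w)

/-- The bipartite crossing number: the minimum crossing number over all two-layer drawings. -/
noncomputable def bcr (E : Finset (X × Y)) : ℕ :=
  sInf {k | ∃ fX fY, crossNum E fX fY = k}

open scoped Classical in
/-- The part of `X` lying in the connected component `c`. -/
noncomputable def compX (E : Finset (X × Y)) (c : (biGraph E).ConnectedComponent) :=
  {x : X // (biGraph E).connectedComponentMk (Sum.inl x) = c}

open scoped Classical in
/-- The part of `Y` lying in the connected component `c`. -/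
noncomputable def compY (E : Finset (X × Y)) (c : (biGraph E).ConnectedComponent) :=
  {y : Y // (biGraph E).connectedComponentMk (Sum.inr y) = c}

open scoped Classical in
noncomputable instance (E : Finset (X × Y)) (c : (biGraph E).ConnectedComponent) :
    Fintype (compX E c) := by unfold compX; infer_instance

open scoped Classical in
noncomputable instance (E : Finset (X × Y)) (c : (biGraph E).ConnectedComponent) :
    Fintype (compY E c) := by unfold compY; infer_instance

instance (E : Finset (X × Y)) (c : (biGraph E).ConnectedComponent) :
    DecidableEq (compX E c) := fun a b =>
  decidable_of_iff (a.1 = b.1) Subtype.coe_inj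

instance (E : Finset (X × Y)) (c : (biGraph E).ConnectedComponent) :
    DecidableEq (compY E c) := fun a b =>
  decidable_of_iff (a.1 = b.1) Subtype.coe_inj

/-- The edge set of the connected component `c`, with endpoints in `compX E c` and
`compY E c`. -/
noncomputable def compE (E : Finset (X × Y)) (c : (biGraph E).ConnectedComponent) :
    Finset (compX E c × compY E c) :=
  Finset.univ.filter fun p => (p.1.1, p.2.1) ∈ E

theorem exists_equivFin_lt_iff {α β : Type*} [Fintype α] [LinearOrder β] (f : α → β)
    (hf : Function.Injective f) :
    ∃ g : α ≃ Fin (Fintype.card α), ∀ a b, g a < g b ↔ f a < f b := by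
  let : LinearOrder α := LinearOrder.lift' f hf
  exact ⟨(monoEquivOfFin α rfl).symm.toEquiv, fun a b => (monoEquivOfFin α rfl).symm.lt_iff_lt⟩

theorem exists_equivFin_concat_fibers {α γ : Type*} [Fintype α] [LinearOrder γ] (π : α → γ)
    {n : γ → ℕ} (g : ∀ c, {a // π a = c} ≃ Fin (n c)) :
    ∃ f : α ≃ Fin (Fintype.card α), (∀ a b, f a < f b → π a ≤ π b) ∧
      ∀ c (a b : {a // π a = c}), g c a < g c b ↔ f a < f b := by
  set key : α → Lex (γ × ℕ) := fun a => toLex (π a, (g (π a) ⟨a, rfl⟩ : ℕ))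
  have key_eq : ∀ c (a : {a // π a = c}), key a = toLex (c, (g c a : ℕ)) := by
    rintro c ⟨a, rfl⟩
    rfl
  have key_injective : Function.Injective key := by
    intro a b h
    have hπ : π a = π b := congrArg (fun k => (ofLex k).1) h
    rw [key_eq (π b) ⟨a, hπ⟩, key_eq (π b) ⟨b, rfl⟩] at h
    simpa using (g (π b)).injective (Fin.ext (Prod.ext_iff.mp (toLex.injective h)).2)
  obtain ⟨f, hf⟩ := exists_equivFin_lt_iff key key_injective
  refine ⟨f, fun a b hab => ?_, fun c a b => ?_⟩
  · rcases Prod.Lex.toLex_lt_toLex.mp ((hf a b).mp hab) with h | ⟨h, -⟩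
    exacts [h.le, h.le]
  · rw [hf, key_eq c a, key_eq c b, Prod.Lex.toLex_lt_toLex]
    simp

def crossings (E : Finset (X × Y)) (fX : X ≃ Fin (Fintype.card X))
    (fY : Y ≃ Fin (Fintype.card Y)) : Finset ((X × Y) × (X × Y)) :=
  (E ×ˢ E).filter fun p => fX p.1.1 < fX p.2.1 ∧ fY p.2.2 < fY p.1.2

theorem bcr_le_crossNum {X Y : Type} [Fintype X] [Fintype Y] (E : Finset (X × Y))
    (fX : X ≃ Fin (Fintype.card X)) (fY : Y ≃ Fin (Fintype.card Y)) : bcr E ≤ crossNum E fX fY :=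
  Nat.sInf_le ⟨fX, fY, rfl⟩

theorem exists_crossNum_eq_bcr {X Y : Type} [Fintype X] [Fintype Y] (E : Finset (X × Y)) :
    ∃ fX fY, crossNum E fX fY = bcr E :=
  Nat.sInf_mem (s := {k | ∃ fX fY, crossNum E fX fY = k})
    ⟨_, Fintype.equivFin X, Fintype.equivFin Y, rfl⟩

def edgeComponent {X Y : Type} (E : Finset (X × Y)) (e : X × Y) :
    (biGraph E).ConnectedComponent :=
  (biGraph E).connectedComponentMk (Sum.inl e.1)

theorem connectedComponentMk_inr_eq_edgeComponent {X Y : Type} {E : Finset (X × Y)} {e : X × Y}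
    (he : e ∈ E) : (biGraph E).connectedComponentMk (Sum.inr e.2) = edgeComponent E e :=
  SimpleGraph.ConnectedComponent.sound
    (SimpleGraph.Adj.reachable (show (biGraph E).Adj (Sum.inr e.2) (Sum.inl e.1) from he))

/-- When the components are drawn in consecutive blocks on both layers, a crossing
`x₁ < x₂`, `y₂ < y₁` orders the blocks of its two edges both ways. -/
theorem edgeComponent_eq_of_mem_crossings {X Y : Type} [Fintype X] [Fintype Y]
    {E : Finset (X × Y)} {fX : X ≃ Fin (Fintype.card X)} {fY : Y ≃ Fin (Fintype.card Y)}
    [LinearOrder (biGraph E).ConnectedComponent]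
    (hfX : ∀ x x', fX x < fX x' → (biGraph E).connectedComponentMk (Sum.inl x) ≤
      (biGraph E).connectedComponentMk (Sum.inl x'))
    (hfY : ∀ y y', fY y < fY y' → (biGraph E).connectedComponentMk (Sum.inr y) ≤
      (biGraph E).connectedComponentMk (Sum.inr y'))
    {p : (X × Y) × (X × Y)} (hp : p ∈ crossings E fX fY) :
    edgeComponent E p.2 = edgeComponent E p.1 := by
  simp only [crossings, Finset.mem_filter, Finset.mem_product] at hp
  obtain ⟨⟨he₁, he₂⟩, hx, hy⟩ := hp
  have h₂₁ := hfY _ _ hy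
  rw [connectedComponentMk_inr_eq_edgeComponent he₁,
    connectedComponentMk_inr_eq_edgeComponent he₂] at h₂₁
  exact le_antisymm h₂₁ (hfX _ _ hx)

section Components

open scoped Classical

variable {E : Finset (X × Y)} {fX : X ≃ Fin (Fintype.card X)} {fY : Y ≃ Fin (Fintype.card Y)}
  {gX : ∀ c, compX E c ≃ Fin (Fintype.card (compX E c))}
  {gY : ∀ c, compY E c ≃ Fin (Fintype.card (compY E c))}

theorem card_crossings_filter_edgeComponent (c : (biGraph E).ConnectedComponent)
    (hgX : ∀ a b : compX E c, gX c a < gX c b ↔ fX a.1 < fX b.1)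
    (hgY : ∀ a b : compY E c, gY c a < gY c b ↔ fY a.1 < fY b.1) :
    ((crossings E fX fY).filter fun p =>
        edgeComponent E p.1 = c ∧ edgeComponent E p.2 = c).card =
      crossNum (compE E c) (gX c) (gY c) := by
  refine (Finset.card_bij (fun q _ => ((q.1.1.1, q.1.2.1), (q.2.1.1, q.2.2.1))) ?_ ?_ ?_).symm
  · rintro ⟨⟨x₁, y₁⟩, ⟨x₂, y₂⟩⟩ hq
    simp only [crossings, compE, Finset.mem_filter, Finset.mem_product,
      Finset.mem_univ, true_and] at hq ⊢
    exact ⟨⟨hq.1, (hgX _ _).mp hq.2.1, (hgY _ _).mp hq.2.2⟩, x₁.2, x₂.2⟩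
  · rintro ⟨⟨x₁, y₁⟩, ⟨x₂, y₂⟩⟩ _ ⟨⟨x₁', y₁'⟩, ⟨x₂', y₂'⟩⟩ _ h
    simp only [Prod.mk.injEq] at h ⊢
    obtain ⟨⟨h₁, h₂⟩, h₃, h₄⟩ := h
    exact ⟨⟨Subtype.ext h₁, Subtype.ext h₂⟩, Subtype.ext h₃, Subtype.ext h₄⟩
  · rintro ⟨e₁, e₂⟩ hp
    simp only [crossings, Finset.mem_filter, Finset.mem_product] at hp
    obtain ⟨⟨⟨he₁, he₂⟩, hx, hy⟩, hc₁, hc₂⟩ := hp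
    refine ⟨((⟨e₁.1, hc₁⟩, ⟨e₁.2, (connectedComponentMk_inr_eq_edgeComponent he₁).trans hc₁⟩),
      (⟨e₂.1, hc₂⟩, ⟨e₂.2, (connectedComponentMk_inr_eq_edgeComponent he₂).trans hc₂⟩)), ?_, rfl⟩
    simp only [compE, Finset.mem_filter, Finset.mem_product, Finset.mem_univ, true_and]
    exact ⟨⟨he₁, he₂⟩, (hgX _ _).mpr hx, (hgY _ _).mpr hy⟩

theorem crossNum_eq_sum_card_crossings_filter :
    crossNum E fX fY =
      ∑ c, ((crossings E fX fY).filter fun p => edgeComponent E p.1 = c).card :=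
  Finset.card_eq_sum_card_fiberwise fun _ _ => Finset.mem_univ _

theorem sum_crossNum_compE_le_crossNum
    (hgX : ∀ c (a b : compX E c), gX c a < gX c b ↔ fX a.1 < fX b.1)
    (hgY : ∀ c (a b : compY E c), gY c a < gY c b ↔ fY a.1 < fY b.1) :
    ∑ c, crossNum (compE E c) (gX c) (gY c) ≤ crossNum E fX fY := by
  rw [crossNum_eq_sum_card_crossings_filter]
  refine Finset.sum_le_sum fun c _ => ?_
  rw [← card_crossings_filter_edgeComponent c (hgX c) (hgY c)]
  exact Finset.card_le_card (Finset.monotone_filter_right _ fun _ _ h => h.1)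

theorem crossNum_eq_sum_crossNum_compE [LinearOrder (biGraph E).ConnectedComponent]
    (hfX : ∀ x x', fX x < fX x' → (biGraph E).connectedComponentMk (Sum.inl x) ≤
      (biGraph E).connectedComponentMk (Sum.inl x'))
    (hfY : ∀ y y', fY y < fY y' → (biGraph E).connectedComponentMk (Sum.inr y) ≤
      (biGraph E).connectedComponentMk (Sum.inr y'))
    (hgX : ∀ c (a b : compX E c), gX c a < gX c b ↔ fX a.1 < fX b.1)
    (hgY : ∀ c (a b : compY E c), gY c a < gY c b ↔ fY a.1 < fY b.1) :
    crossNum E fX fY = ∑ c, crossNum (compE E c) (gX c) (gY c) := by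
  rw [crossNum_eq_sum_card_crossings_filter]
  refine Finset.sum_congr rfl fun c _ => ?_
  rw [← card_crossings_filter_edgeComponent c (hgX c) (hgY c)]
  refine congrArg Finset.card (Finset.ext fun p => ?_)
  simp only [Finset.mem_filter]
  refine ⟨fun ⟨hp, hc⟩ => ⟨hp, hc, ?_⟩, fun ⟨hp, hc, _⟩ => ⟨hp, hc⟩⟩
  exact (edgeComponent_eq_of_mem_crossings hfX hfY hp).trans hc

end Components

theorem sum_bcr_compE_le_bcr (E : Finset (X × Y)) : ∑ c, bcr (compE E c) ≤ bcr E := by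
  obtain ⟨fX, fY, hf⟩ := exists_crossNum_eq_bcr E
  choose gX hgX using fun c => exists_equivFin_lt_iff (fun a : compX E c => fX a.1)
    (fX.injective.comp Subtype.val_injective)
  choose gY hgY using fun c => exists_equivFin_lt_iff (fun b : compY E c => fY b.1)
    (fY.injective.comp Subtype.val_injective)
  calc ∑ c, bcr (compE E c) ≤ ∑ c, crossNum (compE E c) (gX c) (gY c) :=
        Finset.sum_le_sum fun c _ => bcr_le_crossNum _ _ _
    _ ≤ crossNum E fX fY := sum_crossNum_compE_le_crossNum hgX hgY
    _ = bcr E := hf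

theorem bcr_le_sum_bcr_compE (E : Finset (X × Y)) : bcr E ≤ ∑ c, bcr (compE E c) := by
  let : LinearOrder (biGraph E).ConnectedComponent :=
    LinearOrder.lift' _ (Fintype.equivFin _).injective
  choose gX gY hg using fun c => exists_crossNum_eq_bcr (compE E c)
  obtain ⟨fX, hfX, hgX⟩ := exists_equivFin_concat_fibers
    (fun x : X => (biGraph E).connectedComponentMk (Sum.inl x)) gX
  obtain ⟨fY, hfY, hgY⟩ := exists_equivFin_concat_fibers
    (fun y : Y => (biGraph E).connectedComponentMk (Sum.inr y)) gY
  calc bcr E ≤ crossNum E fX fY := bcr_le_crossNum _ _ _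
    _ = ∑ c, crossNum (compE E c) (gX c) (gY c) :=
        crossNum_eq_sum_crossNum_compE hfX hfY hgX hgY
    _ = ∑ c, bcr (compE E c) := Finset.sum_congr rfl fun c _ => hg c

/-- The bipartite crossing number of a bipartite graph is the sum of the bipartite
crossing numbers of its connected components. -/
theorem bcr_eq_sum_components (X Y : Type) [Fintype X] [Fintype Y]
    [DecidableEq X] [DecidableEq Y] (E : Finset (X × Y)) :
    bcr E = ∑ᶠ c : (biGraph E).ConnectedComponent, bcr (compE E c) := by
  rw [finsum_eq_sum_of_fintype]
  exact le_antisymm (bcr_le_sum_bcr_compE E) (sum_bcr_compE_le_bcr E)
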